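/- arXiv:1909.11440 — 3 statements merged into one kernel-verified Lean document; each statement's English description precedes it below -/
import Mathlib

section
/- If a vertex (σ,τ) of the Morse complex M(K), corresponding to a regular pair with dim τ = dim σ + 1, dominates some other vertex of M(K), then dim σ = 0 (i.e., the pair has index 1). -/
open Finset

/-- An abstract simplicial complex on vertex type `V`. -/
structure SComplex (V : Type*) where
  faces : Finset V → Prop
  not_empty : ¬ faces ∅
  down_closed : ∀ {σ τ : Finset V}, faces τ → σ ⊆ τ → σ.Nonempty → faces σ

/-- The complex generated by a set of simplices (downward closure). -/
def ofGens {V : Type*} (gens : Set (Finset V)) : SComplex V where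
  faces σ := σ.Nonempty ∧ ∃ τ ∈ gens, σ ⊆ τ
  not_empty h := by simpa using h.1
  down_closed := by
    rintro σ τ ⟨-, τ', hτ', hsub'⟩ hsub hne
    exact ⟨hne, τ', hτ', hsub.trans hsub'⟩

/-- A primitive (gradient) vector field on `K`: a single regular pair `(σ, τ)`
with `σ` a codimension-one face of `τ`. -/
structure VPair {V : Type*} (K : SComplex V) where
  lo : Finset V
  hi : Finset V
  lo_face : K.faces lo
  hi_face : K.faces hi
  lo_sub : lo ⊆ hi
  card_eq : hi.card = lo.card + 1

noncomputable instance {V : Type*} (K : SComplex V) : DecidableEq (VPair K) :=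
  Classical.decEq _

/-- Two primitive pairs share no simplex. -/
def VPair.Compatible {V : Type*} {K : SComplex V} (p q : VPair K) : Prop :=
  p.lo ≠ q.lo ∧ p.lo ≠ q.hi ∧ p.hi ≠ q.lo ∧ p.hi ≠ q.hi

/-- A discrete vector field: each simplex occurs in at most one pair. -/
def IsDVF {V : Type*} {K : SComplex V} (W : Set (VPair K)) : Prop :=
  ∀ p ∈ W, ∀ q ∈ W, p ≠ q → VPair.Compatible p q

/-- Existence of a nontrivial closed `V`-path. -/
def HasClosedPath {V : Type*} {K : SComplex V} (W : Set (VPair K)) : Prop :=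
  ∃ k : ℕ, 0 < k ∧ ∃ c : ZMod k → VPair K, (∀ i, c i ∈ W) ∧
    ∀ i, (c (i + 1)).lo ⊆ (c i).hi ∧ (c (i + 1)).lo ≠ (c i).lo ∧
      (c (i + 1)).lo.card + 1 = (c i).hi.card

/-- A gradient vector field: a discrete vector field with no nontrivial closed path. -/
def IsGVF {V : Type*} {K : SComplex V} (W : Set (VPair K)) : Prop :=
  IsDVF W ∧ ¬ HasClosedPath W

/-- The Morse complex of `K`: vertices are primitive gradient vector fields,
simplices are gradient vector fields. -/
def MorseComplex {V : Type*} (K : SComplex V) : SComplex (VPair K) where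
  faces S := S.Nonempty ∧ IsGVF {p | p ∈ S}
  not_empty h := by simpa using h.1
  down_closed := by
    rintro σ τ ⟨hne', hdvf, hnc⟩ hsub hne
    refine ⟨hne, fun p hp q hq hpq => hdvf p (hsub hp) q (hsub hq) hpq, fun h => hnc ?_⟩
    obtain ⟨k, hk, c, hc, hpath⟩ := h
    exact ⟨k, hk, c, fun i => hsub (hc i), hpath⟩

/-- The pure Morse complex: the subcomplex of `MorseComplex K` generated by the
facets of maximum dimension (maximum gradient vector fields). -/
def pureMorse {V : Type*} (K : SComplex V) : SComplex (VPair K) where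
  faces S := (MorseComplex K).faces S ∧ ∃ T : Finset (VPair K), S ⊆ T ∧
      (MorseComplex K).faces T ∧
      ∀ T' : Finset (VPair K), (MorseComplex K).faces T' → T'.card ≤ T.card
  not_empty h := (MorseComplex K).not_empty h.1
  down_closed := by
    rintro σ τ ⟨hτ, T, hsub', hT, hmax⟩ hsub hne
    exact ⟨(MorseComplex K).down_closed hτ hsub hne, T, hsub.trans hsub', hT, hmax⟩

/-- `σ` is a facet (maximal simplex) of `K`. -/
def IsFacet {V : Type*} (K : SComplex V) (σ : Finset V) : Prop :=
  K.faces σ ∧ ∀ τ, K.faces τ → σ ⊆ τ → σ = τ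

/-- `w` dominates `w'`: every facet containing `w'` contains `w`. -/
def Dominates {V : Type*} (K : SComplex V) (w w' : V) : Prop :=
  ∀ σ, IsFacet K σ → w' ∈ σ → w ∈ σ

/-- `K` is minimal: no vertex dominates another vertex. -/
def MinimalComplex {V : Type*} (K : SComplex V) : Prop :=
  ∀ w w' : V, K.faces {w} → K.faces {w'} → w ≠ w' → ¬ Dominates K w w'

/-- Strong collapsibility of a face predicate: a sequence of removals of
dominated vertices reaching a single point. -/
inductive SCAux {V : Type*} : (Finset V → Prop) → Prop
  | point (F : Finset V → Prop) (v : V) (h : ∀ σ, F σ ↔ σ = {v}) : SCAux F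
  | step (F : Finset V → Prop) (w w' : V) (hne : w ≠ w') (hw : F {w}) (hw' : F {w'})
      (hdom : ∀ σ, (F σ ∧ ∀ τ, F τ → σ ⊆ τ → σ = τ) → w' ∈ σ → w ∈ σ)
      (h : SCAux (fun σ => F σ ∧ w' ∉ σ)) : SCAux F

def StronglyCollapsible {V : Type*} (K : SComplex V) : Prop := SCAux K.faces

/-- `F` strongly collapses to `G` by a sequence of removals of dominated vertices. -/
inductive SCTo {V : Type*} : (Finset V → Prop) → (Finset V → Prop) → Prop
  | refl (F : Finset V → Prop) : SCTo F F
  | step (F G : Finset V → Prop) (w w' : V) (hne : w ≠ w') (hw : F {w}) (hw' : F {w'})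
      (hdom : ∀ σ, (F σ ∧ ∀ τ, F τ → σ ⊆ τ → σ = τ) → w' ∈ σ → w ∈ σ)
      (h : SCTo (fun σ => F σ ∧ w' ∉ σ) G) : SCTo F G

/-- Collapsibility (Forman): removal of free pairs down to a point. -/
inductive CollAux {V : Type*} : (Finset V → Prop) → Prop
  | point (F : Finset V → Prop) (v : V) (h : ∀ σ, F σ ↔ σ = {v}) : CollAux F
  | step (F : Finset V → Prop) (σ τ : Finset V) (hστ : σ ⊂ τ) (hσ : F σ) (hτ : F τ)
      (hfree : ∀ ρ, F ρ → σ ⊂ ρ → ρ = τ)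
      (h : CollAux (fun ρ => F ρ ∧ ρ ≠ σ ∧ ρ ≠ τ)) : CollAux F

def Collapsible {V : Type*} (K : SComplex V) : Prop := CollAux K.faces

/-- The degree of a vertex: the number of edges of `K` containing it. -/
noncomputable def sdeg {V : Type*} (K : SComplex V) (x : V) : ℕ :=
  Set.ncard {σ : Finset V | K.faces σ ∧ σ.card = 2 ∧ x ∈ σ}

/-- Image of a finset, with a classical decidability instance. -/
noncomputable def fimage {V W : Type*} (f : V → W) (σ : Finset V) : Finset W :=
  haveI := Classical.decEq W
  σ.image f

/-- An isomorphism between two simplicial complexes given by face predicates. -/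
structure ComplexIso {V W : Type*} (F : Finset V → Prop) (G : Finset W → Prop) where
  toFun : V → W
  invFun : W → V
  left_inv : ∀ x, F {x} → invFun (toFun x) = x
  right_inv : ∀ y, G {y} → toFun (invFun y) = y
  map_face : ∀ σ, F σ → G (fimage toFun σ)
  inv_face : ∀ τ, G τ → F (fimage invFun τ)

/-- The join of two simplicial complexes. -/
def sJoin {V W : Type*} [DecidableEq V] [DecidableEq W] (K : SComplex V) (L : SComplex W) :
    SComplex (V ⊕ W) :=
  ofGens {σ | ∃ α β, (K.faces α ∨ α = ∅) ∧ (L.faces β ∨ β = ∅) ∧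
    σ = α.image Sum.inl ∪ β.image Sum.inr}

/-- The disjoint union of two simplicial complexes. -/
def sDisjUnion {V W : Type*} [DecidableEq V] [DecidableEq W] (K : SComplex V) (L : SComplex W) :
    SComplex (V ⊕ W) :=
  ofGens ({σ | ∃ α, K.faces α ∧ σ = α.image Sum.inl} ∪
          {σ | ∃ β, L.faces β ∧ σ = β.image Sum.inr})

/-- The simplicial complex of a simple graph (vertices and edges). -/
def graphComplex {V : Type*} [DecidableEq V] (G : SimpleGraph V) : SComplex V :=
  ofGens ({σ | ∃ x, σ = {x}} ∪ {σ | ∃ x y, G.Adj x y ∧ σ = ({x, y} : Finset V)})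

/-- Attach a leaf (pendant edge) to `K` at the vertex `x`. -/
def attachLeaf {V : Type*} [DecidableEq V] (K : SComplex V) (x : V) : SComplex (V ⊕ Unit) :=
  ofGens ({σ | ∃ α, K.faces α ∧ σ = α.image Sum.inl} ∪
          {({Sum.inl x, Sum.inr ()} : Finset (V ⊕ Unit))})

/-- The cycle graph on `ZMod n`. -/
def cycleGraph (n : ℕ) : SimpleGraph (ZMod n) :=
  SimpleGraph.fromRel (fun i j => j = i + 1)

/-- Attach one new leaf to every vertex of a graph. -/
def addLeaves {V : Type*} [DecidableEq V] (G : SimpleGraph V) : SComplex (V ⊕ V) :=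
  ofGens ({σ | ∃ x y, G.Adj x y ∧ σ = ({Sum.inl x, Sum.inl y} : Finset (V ⊕ V))} ∪
          {σ | ∃ u, σ = ({Sum.inl u, Sum.inr u} : Finset (V ⊕ V))})

/-- The geometric realization of `K`, inside `V → ℝ`. -/
def realization {V : Type*} (K : SComplex V) : Set (V → ℝ) :=
  {f | ∃ σ, K.faces σ ∧ (∀ x, 0 ≤ f x) ∧ (∀ x, f x ≠ 0 → x ∈ σ) ∧ ∑ x ∈ σ, f x = 1}

/-- A Hasse-diagram edge of a poset: a covering pair. -/
structure HEdge (P : Type*) [PartialOrder P] where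
  lo : P
  hi : P
  cov : lo ⋖ hi

noncomputable instance {P : Type*} [PartialOrder P] : DecidableEq (HEdge P) :=
  Classical.decEq _

def HEdge.Compat {P : Type*} [PartialOrder P] (p q : HEdge P) : Prop :=
  p.lo ≠ q.lo ∧ p.lo ≠ q.hi ∧ p.hi ≠ q.lo ∧ p.hi ≠ q.hi

def HasPosetCycle {P : Type*} [PartialOrder P] (W : Set (HEdge P)) : Prop :=
  ∃ k : ℕ, 0 < k ∧ ∃ c : ZMod k → HEdge P, (∀ i, c i ∈ W) ∧
    ∀ i, (c (i + 1)).lo ⋖ (c i).hi ∧ (c (i + 1)).lo ≠ (c i).lo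

/-- The generalized Morse complex `f(P)` of a poset: simplices are acyclic
matchings of the Hasse diagram of `P`. -/
def genMorse (P : Type*) [PartialOrder P] : SComplex (HEdge P) where
  faces S := S.Nonempty ∧ (∀ p ∈ S, ∀ q ∈ S, p ≠ q → HEdge.Compat p q) ∧
    ¬ HasPosetCycle {p | p ∈ S}
  not_empty h := by simpa using h.1
  down_closed := by
    rintro σ τ ⟨-, hm, hc⟩ hsub hne
    refine ⟨hne, fun p hp q hq h => hm p (hsub hp) q (hsub hq) h, fun h => hc ?_⟩
    obtain ⟨k, hk, c, hc', hp⟩ := h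
    exact ⟨k, hk, c, fun i => hsub (hc' i), hp⟩

/-- The automorphism group of a simplicial complex, as a subgroup of `Perm V`. -/
def autGroup {V : Type*} [DecidableEq V] (K : SComplex V) : Subgroup (Equiv.Perm V) where
  carrier := {e | ∀ σ : Finset V, K.faces σ ↔ K.faces (σ.image e)}
  one_mem' := by intro σ; simp
  mul_mem' := by
    intro a b ha hb σ
    rw [hb σ, ha (σ.image b)]
    simp [Finset.image_image, Equiv.Perm.coe_mul]
  inv_mem' := by
    intro a ha σ
    have := ha (σ.image ⇑a⁻¹)
    simpa [Finset.image_image, Function.comp_def, Equiv.apply_symm_apply,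
      Finset.image_id'] using this.symm

/-- The full subcomplex of `K` on a set `S` of vertices. -/
def restrictTo {V : Type*} (K : SComplex V) (S : Set V) : Finset V → Prop :=
  fun σ => K.faces σ ∧ ∀ x ∈ σ, x ∈ S

/-- `S` spans a fully connected subcomplex: `K = (K∣S) * (K∣Sᶜ)`. -/
def FullyConnected {V : Type*} [DecidableEq V] (K : SComplex V) (S : Set V) : Prop :=
  ∀ σ : Finset V, K.faces σ ↔ (σ.Nonempty ∧ ∃ α β : Finset V,
    (restrictTo K S α ∨ α = ∅) ∧ ((K.faces β ∧ ∀ x ∈ β, x ∉ S) ∨ β = ∅) ∧ σ = α ∪ β)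

/-- The primitive pair `(x, xy)` on an edge `{x,y}`. -/
def edgePair {V : Type*} [DecidableEq V] (K : SComplex V) (x y : V) (hxy : x ≠ y)
    (h : K.faces {x, y}) : VPair K where
  lo := {x}
  hi := {x, y}
  lo_face := K.down_closed h (by simp) (Finset.singleton_nonempty x)
  hi_face := h
  lo_sub := by simp
  card_eq := by
    rw [Finset.card_singleton, Finset.card_insert_of_notMem (by simp [hxy]),
      Finset.card_singleton]

/-!
Suppose `p = (σ, τ)` dominates `q` with `|σ| ≥ 2`. Every facet of `M(K)` through `q` contains `p`,
so `p` and `q` are compatible. Since `σ` has at least two codimension-one faces and at most one of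
them can be `q.lo` or `q.hi`, some face `σ ∖ {x}` avoids both, and `r = (σ ∖ {x}, σ)` is compatible
with `q`. Two compatible pairs never form a closed `V`-path, so `{q, r}` is a face of `M(K)`; a
facet through it contains `p` by domination, but `p` and `r` share the simplex `σ`.
-/

section SimplicialComplex

variable {V : Type*} (K : SComplex V)

theorem SComplex.nonempty_of_faces {s : Finset V} (hs : K.faces s) : s.Nonempty :=
  Finset.nonempty_iff_ne_empty.2 fun h => K.not_empty (h ▸ hs)

theorem SComplex.exists_isFacet_superset [Finite V] {s : Finset V} (hs : K.faces s) :
    ∃ t, IsFacet K t ∧ s ⊆ t := by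
  obtain ⟨t, hst, ht, hmax⟩ := Finite.exists_le_maximal (p := K.faces) hs
  exact ⟨t, ⟨ht, fun u hu htu => le_antisymm htu (hmax hu htu)⟩, hst⟩

variable {K}

theorem Dominates.faces_insert [Finite V] [DecidableEq V] {w w' : V} (h : Dominates K w w')
    {s : Finset V} (hs : K.faces s) (hw' : w' ∈ s) : K.faces (insert w s) := by
  obtain ⟨t, ht, hst⟩ := K.exists_isFacet_superset hs
  exact K.down_closed ht.1 (Finset.insert_subset (h t ht (hst hw')) hst)
    (Finset.insert_nonempty _ _)

end SimplicialComplex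

theorem Finset.exists_erase_ne_ne {α : Type*} [DecidableEq α] {s a b : Finset α}
    (hs : 1 < s.card) (hab : a.card ≠ b.card) : ∃ x ∈ s, s.erase x ≠ a ∧ s.erase x ≠ b := by
  by_contra! hcover
  obtain ⟨x, hx, y, hy, hxy⟩ := Finset.one_lt_card.mp hs
  have hcard : (s.erase x).card = (s.erase y).card := by
    rw [Finset.card_erase_of_mem hx, Finset.card_erase_of_mem hy]
  have hinj : s.erase x ≠ s.erase y := fun h => hxy (s.erase_injOn hx hy h)
  rcases eq_or_ne (s.erase x) a with hxa | hxa <;> rcases eq_or_ne (s.erase y) a with hya | hya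
  · exact hinj (hxa.trans hya.symm)
  · exact hab (hxa ▸ hcover y hy hya ▸ hcard)
  · exact hab (hya ▸ hcover x hx hxa ▸ hcard.symm)
  · exact hinj ((hcover x hx hxa).trans (hcover y hy hya).symm)

namespace VPair

variable {V : Type*} {K : SComplex V}

theorem ext {p q : VPair K} (hlo : p.lo = q.lo) (hhi : p.hi = q.hi) : p = q := by
  cases p; cases q; simp_all

instance [Finite V] : Finite (VPair K) :=
  Finite.of_injective (fun p => (p.lo, p.hi)) fun _ _ h =>
    ext (congrArg Prod.fst h) (congrArg Prod.snd h)

def ofErase [DecidableEq V] {s : Finset V} (hs : K.faces s) {x : V} (hx : x ∈ s)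
    (hcard : 1 < s.card) : VPair K where
  lo := s.erase x
  hi := s
  lo_face := K.down_closed hs (s.erase_subset x)
    (Finset.card_pos.mp (by rw [Finset.card_erase_of_mem hx]; omega))
  hi_face := hs
  lo_sub := s.erase_subset x
  card_eq := by rw [Finset.card_erase_of_mem hx]; omega

/-- `q` may follow `p` in a `V`-path; `HasClosedPath` asks for a cyclic sequence of such steps. -/
def Step (p q : VPair K) : Prop :=
  q.lo ⊆ p.hi ∧ q.lo ≠ p.lo ∧ q.lo.card + 1 = p.hi.card

theorem Step.ne {p q : VPair K} (h : p.Step q) : p ≠ q := fun e => h.2.1 (e ▸ rfl)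

/-- In a `V`-path `q, r, q`, both `q.lo` and `r.lo` are distinct facets of `q.hi` and of `r.hi`. -/
theorem Step.hi_eq_of_step {q r : VPair K} (hqr : q.Step r) (hrq : r.Step q) : q.hi = r.hi := by
  classical
  obtain ⟨hr_sub, hr_ne, hr_card⟩ := hqr
  obtain ⟨hq_sub, -, hq_card⟩ := hrq
  have hlo_card : q.lo.card = r.lo.card := by have := r.card_eq; omega
  have hlo_ssub : r.lo ⊂ r.lo ∪ q.lo := by
    refine Finset.ssubset_iff_subset_ne.2 ⟨Finset.subset_union_left, fun h => hr_ne ?_⟩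
    exact (Finset.eq_of_subset_of_card_le (h ▸ Finset.subset_union_right) hlo_card.ge).symm
  have hunion_card := Finset.card_lt_card hlo_ssub
  have hq : r.lo ∪ q.lo = q.hi :=
    Finset.eq_of_subset_of_card_le (Finset.union_subset hr_sub q.lo_sub) (by omega)
  have hr : r.lo ∪ q.lo = r.hi :=
    Finset.eq_of_subset_of_card_le (Finset.union_subset r.lo_sub hq_sub) (by omega)
  exact hq.symm.trans hr

theorem step_step_of_hasClosedPath_pair [DecidableEq V] {q r : VPair K}
    (h : HasClosedPath {a | a ∈ ({q, r} : Finset (VPair K))}) : q.Step r ∧ r.Step q := by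
  obtain ⟨k, -, c, hc, hstep⟩ := h
  have h₀ : c 0 = q ∨ c 0 = r := by simpa using hc 0
  have h₁ : c (0 + 1) = q ∨ c (0 + 1) = r := by simpa using hc (0 + 1)
  have h₂ : c (0 + 1 + 1) = q ∨ c (0 + 1 + 1) = r := by simpa using hc (0 + 1 + 1)
  have s₀ : (c 0).Step (c (0 + 1)) := hstep 0
  have s₁ : (c (0 + 1)).Step (c (0 + 1 + 1)) := hstep (0 + 1)
  have n₀ := s₀.ne
  have n₁ := s₁.ne
  rcases h₀ with h₀ | h₀ <;> rcases h₁ with h₁ | h₁ <;> rcases h₂ with h₂ | h₂ <;>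
    simp only [h₀, h₁, h₂] at s₀ s₁ n₀ n₁ <;>
    first
      | exact absurd rfl n₀
      | exact absurd rfl n₁
      | exact ⟨s₀, s₁⟩
      | exact ⟨s₁, s₀⟩

end VPair

namespace MorseComplex

variable {V : Type*} {K : SComplex V}

theorem faces_pair {q r : VPair K} (h : q.Compatible r) : (MorseComplex K).faces {q, r} := by
  classical
  refine ⟨Finset.insert_nonempty _ _, fun a ha b hb hab => ?_, fun hcyc => ?_⟩
  · simp only [Set.mem_ofPred_eq, Finset.mem_insert, Finset.mem_singleton] at ha hb
    rcases ha with rfl | rfl <;> rcases hb with rfl | rfl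
    · exact absurd rfl hab
    · exact h
    · exact ⟨h.1.symm, h.2.2.1.symm, h.2.1.symm, h.2.2.2.symm⟩
    · exact absurd rfl hab
  · obtain ⟨hqr, hrq⟩ := VPair.step_step_of_hasClosedPath_pair hcyc
    exact h.2.2.2 (hqr.hi_eq_of_step hrq)

theorem faces_singleton (q : VPair K) : (MorseComplex K).faces {q} := by
  classical
  refine ⟨Finset.singleton_nonempty q, fun a ha b hb hab => ?_, fun hcyc => ?_⟩
  · simp only [Set.mem_ofPred_eq, Finset.mem_singleton] at ha hb
    exact absurd (ha.trans hb.symm) hab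
  · rw [← Finset.pair_eq_singleton q] at hcyc
    exact (VPair.step_step_of_hasClosedPath_pair hcyc).1.ne rfl

end MorseComplex

/-- if a vertex `(σ,τ)` of `M(K)` dominates some other vertex,
then `dim σ = 0`, i.e. `σ` is a single vertex. -/
theorem stmt_0 {V : Type*} [Fintype V] (K : SComplex V) (p q : VPair K)
    (hpq : p ≠ q) (h : Dominates (MorseComplex K) p q) : p.lo.card = 1 := by
  classical
  have hpq' : p.Compatible q :=
    (h.faces_insert (MorseComplex.faces_singleton q) (Finset.mem_singleton_self q)).2.1
      p (by simp) q (by simp) hpq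
  by_contra hne
  have hcard : 1 < p.lo.card :=
    lt_of_le_of_ne (Finset.card_pos.2 (K.nonempty_of_faces p.lo_face)) (Ne.symm hne)
  obtain ⟨x, hx, hxq, hxq'⟩ :=
    Finset.exists_erase_ne_ne (a := q.lo) (b := q.hi) hcard (by rw [q.card_eq]; omega)
  set r := VPair.ofErase p.lo_face hx hcard
  have hqr : q.Compatible r := ⟨hxq.symm, hpq'.1.symm, hxq'.symm, hpq'.2.1.symm⟩
  have hpr : p ≠ r := fun e => by
    have hxr : x ∈ r.lo := e ▸ hx
    simp [r, VPair.ofErase] at hxr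
  have hpqr := h.faces_insert (MorseComplex.faces_pair hqr) (by simp)
  exact (hpqr.2.1 p (by simp) r (by simp) hpr).2.1 rfl
end

section
/- For each cycle C_n (n ≥ 3) with a leaf ℓ attached at a vertex v, the Morse complex M(C_n ∨_v ℓ) strongly collapses to a complex isomorphic to the Morse complex M(P_{n-1} ⊔ ℓ) of the disjoint union of the path on n vertices and an edge. -/
open Finset

/-!
A primitive vector field of a graph is a flag `(x, e)` with `x ∈ e`, two of them are compatible
when they share neither the vertex nor the edge, and a gradient path is a walk that never turns
back. In `C_n ∨_v ℓ` the flag `(tip, leaf edge)` dominates the two flags `(v, e)` with `e` a cycle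
edge: a facet containing one of them cannot contain `(v, leaf edge)`, and the tip flag conflicts
with nothing else and is entered by no gradient path. Removing them leaves no closed gradient
path, since such a path would have to leave `v` along the cycle; so what remains is the complex of
sets of pairwise compatible flags. Cut open at `v`, the flags of the cycle form a path of
incidences `e₀ - (v+1) - e₁ - ⋯ - (v-1) - e_{n-1}` with `eᵢ = {v+i, v+i+1}`, those of `P_{n-1}`
a path `0 - f₀ - 1 - ⋯ - f_{n-2} - (n-1)` of the same length; matching them node by node
exchanges vertices and edges and preserves compatibility, and the leaf edge goes to `ℓ`.
-/

namespace VPair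

variable {V : Type*} {K : SComplex V}

def ofMem (K : SComplex V) (x : V) (e : Finset V) (he : K.faces e) (hx : x ∈ e)
    (hcard : e.card = 2) : VPair K where
  lo := {x}
  hi := e
  lo_face := K.down_closed he (singleton_subset_iff.2 hx) (singleton_nonempty x)
  hi_face := he
  lo_sub := singleton_subset_iff.2 hx
  card_eq := by rw [hcard, card_singleton]

theorem lo_nonempty (p : VPair K) : p.lo.Nonempty :=
  nonempty_iff_ne_empty.2 fun h => K.not_empty (h ▸ p.lo_face)

theorem eq_pair_of_hi_subset [DecidableEq V] (p : VPair K) {a b : V} (h : p.hi ⊆ {a, b}) :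
    p.hi = {a, b} ∧ (p.lo = {a} ∨ p.lo = {b}) := by
  have hlo := p.lo_nonempty.card_pos
  have hhi : p.hi = {a, b} :=
    eq_of_subset_of_card_le h (card_le_two.trans (by have := p.card_eq; omega))
  refine ⟨hhi, ?_⟩
  obtain ⟨x, hx⟩ := card_eq_one.1 (show p.lo.card = 1 by
    have := card_le_two (a := a) (b := b); rw [← hhi, p.card_eq] at this; omega)
  have hxab : x ∈ ({a, b} : Finset V) := hhi ▸ p.lo_sub (hx ▸ mem_singleton_self x)
  rcases mem_insert.1 hxab with rfl | hxb
  · exact Or.inl hx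
  · exact Or.inr (hx.trans (by rw [mem_singleton.1 hxb]))

theorem Compatible.symm {p q : VPair K} (h : p.Compatible q) : q.Compatible p :=
  ⟨h.1.symm, h.2.2.1.symm, h.2.1.symm, h.2.2.2.symm⟩

/-- A vertex is never an edge, so two of the four conditions are automatic. -/
theorem compatible_iff {p q : VPair K} (hp : p.lo.card = 1) (hq : q.lo.card = 1) :
    p.Compatible q ↔ p.lo ≠ q.lo ∧ p.hi ≠ q.hi := by
  refine ⟨fun h => ⟨h.1, h.2.2.2⟩, fun ⟨hlo, hhi⟩ => ⟨hlo, ?_, ?_, hhi⟩⟩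
  · intro h; have := q.card_eq; rw [← h] at this; omega
  · intro h; have := p.card_eq; rw [h] at this; omega

end VPair

section MorseComplex

variable {V : Type*} {K : SComplex V}

theorem MorseComplex.faces_singleton_s11 (p : VPair K) : (MorseComplex K).faces {p} := by
  refine ⟨singleton_nonempty p, fun q hq r hr hqr => absurd ((mem_singleton.1 hq).trans
    (mem_singleton.1 hr).symm) hqr, ?_⟩
  rintro ⟨k, -, c, hc, hpath⟩
  exact (hpath 0).2.1
    (congrArg VPair.lo ((mem_singleton.1 (hc _)).trans (mem_singleton.1 (hc _)).symm))

theorem not_hasClosedPath_of_rank {ι : Type*} {W : Set (VPair K)} (hW : IsDVF W)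
    (f : ι → VPair K) (hWf : W ⊆ Set.range f) (r : ι → ℕ)
    (hr : ∀ c d, (f d).lo ⊆ (f c).hi → (f d).lo ≠ (f c).lo → (f d).hi ≠ (f c).hi → r c < r d) :
    ¬ HasClosedPath W := by
  rintro ⟨k, hk, c, hc, hpath⟩
  have : NeZero k := ⟨hk.ne'⟩
  choose g hg using fun i => hWf (hc i)
  obtain ⟨i, hi⟩ := Finite.exists_max (r ∘ g)
  obtain ⟨hsub, hne, -⟩ := hpath i
  have hhi := (hW _ (hc (i + 1)) _ (hc i) fun h => hne (by rw [h])).2.2.2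
  rw [← hg, ← hg] at hsub hne hhi
  exact (hr _ _ hsub hne hhi).not_ge (hi (i + 1))

/-- `hw` says that `w` has no predecessor in `insert w σ`. -/
theorem HasClosedPath.of_insert {σ : Finset (VPair K)} {w : VPair K}
    (hw : ∀ p ∈ insert w σ, w.lo ⊆ p.hi → w.lo = p.lo)
    (h : HasClosedPath {p | p ∈ insert w σ}) : HasClosedPath {p | p ∈ σ} := by
  obtain ⟨k, hk, c, hc, hpath⟩ := h
  refine ⟨k, hk, c, fun i => (mem_insert.1 (hc i)).resolve_left fun hi => ?_, hpath⟩
  obtain ⟨hsub, hne, -⟩ := hpath (i - 1)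
  rw [sub_add_cancel, hi] at hsub hne
  exact hne (hw _ (hc _) hsub)

theorem mem_fimage {W : Type*} {f : V → W} {s : Finset V} {y : W} :
    y ∈ fimage f s ↔ ∃ x ∈ s, f x = y := by
  classical
  exact mem_image

theorem Finset.Nonempty.fimage {W : Type*} {s : Finset V} (h : s.Nonempty) (f : V → W) :
    (_root_.fimage f s).Nonempty := by
  classical
  exact h.image f

theorem IsDVF.fimage {W : Type*} {L : SComplex W} {σ : Finset (VPair K)}
    (hσ : IsDVF {p | p ∈ σ}) (f : VPair K → VPair L)
    (hf : ∀ p ∈ σ, ∀ q ∈ σ, p.Compatible q → (f p).Compatible (f q)) :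
    IsDVF {q | q ∈ fimage f σ} := by
  rintro _ hfp _ hfq hpq
  obtain ⟨p, hp, rfl⟩ := mem_fimage.1 hfp
  obtain ⟨q, hq, rfl⟩ := mem_fimage.1 hfq
  exact hf p hp q hq (hσ p hp q hq fun h => hpq (h ▸ rfl))

end MorseComplex

theorem dominates_of_insert {V : Type*} [DecidableEq V] {F : Finset V → Prop} {w w' : V}
    (h : ∀ σ, F σ → w' ∈ σ → F (insert w σ)) :
    ∀ σ, (F σ ∧ ∀ τ, F τ → σ ⊆ τ → σ = τ) → w' ∈ σ → w ∈ σ :=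
  fun σ ⟨hσ, hmax⟩ hw' => (hmax _ (h σ hσ hw') (subset_insert w σ)).symm ▸ mem_insert_self w σ

theorem graphComplex_faces_subset {V : Type*} [DecidableEq V] {G : SimpleGraph V}
    {α : Finset V} (h : (graphComplex G).faces α) :
    ∃ x y, (x = y ∨ G.Adj x y) ∧ α ⊆ {x, y} := by
  obtain ⟨-, τ, ⟨x, rfl⟩ | ⟨x, y, hxy, rfl⟩, hα⟩ := h
  · exact ⟨x, x, Or.inl rfl, by simpa using hα⟩
  · exact ⟨x, y, Or.inr hxy, hα⟩

instance Fact.one_lt_of_two_lt {n : ℕ} [h : Fact (2 < n)] : Fact (1 < n) :=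
  ⟨by have := h.out; omega⟩

/-- The flags of the path `P_{n-1}` on `0, …, n-1`: `vtx` lies on the edge `{edge, edge + 1}`. -/
@[ext] structure PathFlag (n : ℕ) where
  edge : ℕ
  vtx : ℕ
  edge_succ_lt : edge + 1 < n
  vtx_eq : vtx = edge ∨ vtx = edge + 1

theorem PathFlag.vtx_lt {n : ℕ} (f : PathFlag n) : f.vtx < n := by
  have := f.edge_succ_lt; have := f.vtx_eq; omega

/-- The flags of `P_{n-1} ⊔ ℓ`; `inl b` is the endpoint `0` (`b = true`) or `1` of `ℓ`. -/
abbrev Incidence (n : ℕ) := Bool ⊕ PathFlag n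

namespace Incidence

def Compatible {n : ℕ} : Incidence n → Incidence n → Prop
  | .inl _, .inl _ => False
  | .inr f, .inr g => f.edge ≠ g.edge ∧ f.vtx ≠ g.vtx
  | _, _ => True

/-- Along a gradient path of `P_{n-1}` the flags with `vtx = edge` move up and the others move
down, so the rank increases at each step. -/
def pathRank {n : ℕ} : Incidence n → ℕ
  | .inl _ => 0
  | .inr f => if f.vtx = f.edge then f.edge else n - f.edge

/-- On the corresponding flags of the cycle the directions are reversed, and a gradient path may
enter the leaf edge but not leave it. -/
def cycleRank {n : ℕ} : Incidence n → ℕ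
  | .inl _ => n + 1
  | .inr f => if f.vtx = f.edge then n - f.edge else f.edge

end Incidence

section CycleLeaf

variable {n : ℕ}

abbrev cycleLeaf (n : ℕ) (v : ZMod n) : SComplex (ZMod n ⊕ Unit) :=
  attachLeaf (graphComplex (cycleGraph n)) v

def cycVert (v : ZMod n) (a : ℕ) : ZMod n ⊕ Unit := .inl (v + a)

def cycEdge (v : ZMod n) (a : ℕ) : Finset (ZMod n ⊕ Unit) := {cycVert v a, cycVert v (a + 1)}

def leafEdge (v : ZMod n) : Finset (ZMod n ⊕ Unit) := {.inl v, .inr ()}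

variable (v : ZMod n)

theorem cycVert_zero : cycVert v 0 = .inl v := by simp [cycVert]

theorem cycVert_self : cycVert v n = .inl v := by simp [cycVert]

theorem cycVert_ne_inr (a : ℕ) : cycVert v a ≠ .inr () := Sum.inl_ne_inr

theorem cycVert_eq_cycVert_iff {a b : ℕ} (ha : a ≤ n) (hb : b ≤ n) :
    cycVert v a = cycVert v b ↔ a = b ∨ a = 0 ∧ b = n ∨ a = n ∧ b = 0 := by
  simp only [cycVert, Sum.inl.injEq, add_right_inj, ZMod.natCast_eq_natCast_iff' a b n]
  rcases ha.lt_or_eq with ha | rfl <;> rcases hb.lt_or_eq with hb | rfl <;>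
    simp [Nat.mod_eq_of_lt, *] <;> omega

theorem cycVert_succ_ne_inl (f : PathFlag n) : cycVert v (f.edge + 1) ≠ .inl v := by
  have := f.edge_succ_lt
  rw [← cycVert_zero, Ne, cycVert_eq_cycVert_iff v this.le (Nat.zero_le n)]
  omega

theorem cycVert_succ_inj {f g : PathFlag n} :
    cycVert v (f.edge + 1) = cycVert v (g.edge + 1) ↔ f.edge = g.edge := by
  have := f.edge_succ_lt; have := g.edge_succ_lt
  rw [cycVert_eq_cycVert_iff v (by omega) (by omega)]
  omega

theorem cycEdge_inj [h : Fact (2 < n)] {a b : ℕ} (ha : a < n) (hb : b < n) :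
    cycEdge v a = cycEdge v b ↔ a = b := by
  have := h.out
  refine ⟨fun hab => ?_, fun hab => hab ▸ rfl⟩
  rw [cycEdge, cycEdge, ← coe_inj, coe_pair, coe_pair, Set.pair_eq_pair_iff,
    cycVert_eq_cycVert_iff v ha.le hb.le, cycVert_eq_cycVert_iff v ha hb,
    cycVert_eq_cycVert_iff v ha.le hb, cycVert_eq_cycVert_iff v ha hb.le] at hab
  omega

theorem cycEdge_val_sub [NeZero n] (x : ZMod n) :
    cycEdge v (x - v).val = {.inl x, .inl (x + 1)} := by
  simp [cycEdge, cycVert, ← add_assoc]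

theorem inr_notMem_cycEdge (a : ℕ) : .inr () ∉ cycEdge v a := by simp [cycEdge, cycVert]

theorem leafEdge_ne_cycEdge (a : ℕ) : leafEdge v ≠ cycEdge v a :=
  fun h => inr_notMem_cycEdge v a (h ▸ by simp [leafEdge])

theorem leafEdge_mem_faces : (cycleLeaf n v).faces (leafEdge v) :=
  ⟨insert_nonempty _ _, leafEdge v, Or.inr rfl, subset_rfl⟩

theorem card_leafEdge : (leafEdge v).card = 2 := card_pair (by simp)

variable [Fact (1 < n)]

theorem cycEdge_mem_faces (a : ℕ) : (cycleLeaf n v).faces (cycEdge v a) := by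
  refine ⟨insert_nonempty _ _, cycEdge v a, Or.inl ⟨{v + a, v + a + 1}, ?_, ?_⟩, subset_rfl⟩
  · refine ⟨insert_nonempty _ _, _, Or.inr ⟨_, _, ?_, rfl⟩, subset_rfl⟩
    exact (SimpleGraph.fromRel_adj _ _ _).2 ⟨by simp, Or.inl rfl⟩
  · simp [cycEdge, cycVert, add_assoc]

theorem card_cycEdge (a : ℕ) : (cycEdge v a).card = 2 :=
  card_pair (by simp [cycVert])

theorem cycleLeaf_faces_subset {σ : Finset (ZMod n ⊕ Unit)} (h : (cycleLeaf n v).faces σ) :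
    σ ⊆ leafEdge v ∨ ∃ a < n, σ ⊆ cycEdge v a := by
  obtain ⟨-, τ, ⟨α, hα, rfl⟩ | rfl, hσ⟩ := h
  · obtain ⟨x, y, hxy, hα⟩ := graphComplex_faces_subset hα
    have hsub : ∀ z, ({z, z + 1} : Finset (ZMod n)).image .inl ⊆ cycEdge v (z - v).val := by
      simp [cycEdge_val_sub]
    right
    rcases hxy with rfl | hadj
    · exact ⟨_, ZMod.val_lt _, hσ.trans ((image_subset_image hα).trans
        ((image_subset_image (by simp)).trans (hsub x)))⟩
    · obtain ⟨-, rfl | rfl⟩ := (SimpleGraph.fromRel_adj _ _ _).1 hadj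
      · exact ⟨_, ZMod.val_lt _, hσ.trans ((image_subset_image hα).trans (hsub x))⟩
      · exact ⟨_, ZMod.val_lt _, hσ.trans ((image_subset_image hα).trans
          (by rw [pair_comm]; exact hsub y))⟩
  · exact Or.inl hσ

theorem cycleLeaf_lo_card (p : VPair (cycleLeaf n v)) : p.lo.card = 1 := by
  rcases cycleLeaf_faces_subset v p.hi_face with hsub | ⟨a, -, hsub⟩ <;>
  · obtain ⟨-, hlo | hlo⟩ := p.eq_pair_of_hi_subset hsub <;> rw [hlo, card_singleton]

def baseUp : VPair (cycleLeaf n v) :=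
  .ofMem _ (.inl v) (cycEdge v 0) (cycEdge_mem_faces v 0) (by simp [cycEdge, cycVert_zero])
    (card_cycEdge v 0)

def baseDown : VPair (cycleLeaf n v) :=
  .ofMem _ (.inl v) (cycEdge v (n - 1)) (cycEdge_mem_faces v _)
    (by simp [cycEdge, Nat.sub_add_cancel (NeZero.one_le : 1 ≤ n), cycVert_self])
    (card_cycEdge v _)

end CycleLeaf

namespace Incidence

variable {n : ℕ} [Fact (1 < n)] (v : ZMod n)

/-- Cutting the cycle open at `v` exchanges vertices and edges: the path vertex `x` goes to the
cycle edge `{v + x, v + x + 1}` and the path edge `{e, e + 1}` to the cycle vertex `v + e + 1`. -/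
def toCycleLeaf : Incidence n → VPair (cycleLeaf n v)
  | .inl true => .ofMem _ (.inl v) (leafEdge v) (leafEdge_mem_faces v) (by simp [leafEdge])
      (card_leafEdge v)
  | .inl false => .ofMem _ (.inr ()) (leafEdge v) (leafEdge_mem_faces v) (by simp [leafEdge])
      (card_leafEdge v)
  | .inr f => .ofMem _ (cycVert v (f.edge + 1)) (cycEdge v f.vtx) (cycEdge_mem_faces v _)
      (by rcases f.vtx_eq with h | h <;> simp [cycEdge, h]) (card_cycEdge v _)

theorem toCycleLeaf_ne {p : VPair (cycleLeaf n v)} (hlo : p.lo = {.inl v})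
    (hhi : p.hi ≠ leafEdge v) (c : Incidence n) : c.toCycleLeaf v ≠ p := by
  rintro rfl
  rcases c with (_ | _) | f
  · simp [toCycleLeaf, VPair.ofMem] at hlo
  · exact hhi rfl
  · exact cycVert_succ_ne_inl v f (singleton_inj.1 hlo)

theorem exists_toCycleLeaf_eq (p : VPair (cycleLeaf n v)) (hup : p ≠ baseUp v)
    (hdown : p ≠ baseDown v) : ∃ c : Incidence n, c.toCycleLeaf v = p := by
  rcases cycleLeaf_faces_subset v p.hi_face with h | ⟨a, ha, h⟩
  · obtain ⟨hhi, hlo | hlo⟩ := p.eq_pair_of_hi_subset h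
    · exact ⟨.inl true, VPair.ext hlo.symm hhi.symm⟩
    · exact ⟨.inl false, VPair.ext hlo.symm hhi.symm⟩
  · obtain ⟨hhi, hlo | hlo⟩ := p.eq_pair_of_hi_subset h
    · obtain rfl | ha0 := Nat.eq_zero_or_pos a
      · exact absurd (VPair.ext (hlo.trans (by rw [cycVert_zero]; rfl)) hhi) hup
      refine ⟨.inr ⟨a - 1, a, by omega, by omega⟩, VPair.ext ?_ hhi.symm⟩
      rw [hlo]
      show {cycVert v (a - 1 + 1)} = _
      rw [Nat.sub_add_cancel ha0]
    · by_cases han : a + 1 = n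
      · refine absurd (VPair.ext (hlo.trans (by rw [han, cycVert_self]; rfl)) ?_) hdown
        rw [hhi]
        show _ = cycEdge v (n - 1)
        rw [show n - 1 = a by omega]
        rfl
      · exact ⟨.inr ⟨a, a, by omega, Or.inl rfl⟩, VPair.ext hlo.symm hhi.symm⟩

theorem cycleRank_lt {c d : Incidence n} (hsub : (d.toCycleLeaf v).lo ⊆ (c.toCycleLeaf v).hi)
    (hlo : (d.toCycleLeaf v).lo ≠ (c.toCycleLeaf v).lo)
    (hhi : (d.toCycleLeaf v).hi ≠ (c.toCycleLeaf v).hi) : c.cycleRank < d.cycleRank := by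
  rcases c with (_ | _) | f <;> rcases d with (_ | _) | g
  any_goals exact absurd rfl hhi
  any_goals
    simp [toCycleLeaf, VPair.ofMem, leafEdge, cycVert_ne_inr, cycVert_succ_ne_inl] at hsub; done
  any_goals
    have := f.edge_succ_lt
    simp only [cycleRank]
    split_ifs <;> omega
  have := f.edge_succ_lt; have := g.edge_succ_lt; have := f.vtx_lt; have := f.vtx_eq
  have := g.vtx_eq
  have hlo' : g.edge ≠ f.edge := fun h => hlo (by simp [toCycleLeaf, VPair.ofMem, h])
  have hhi' : g.vtx ≠ f.vtx := fun h => hhi (by simp [toCycleLeaf, VPair.ofMem, h])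
  simp only [toCycleLeaf, VPair.ofMem, singleton_subset_iff, cycEdge, mem_insert,
    mem_singleton] at hsub
  rw [cycVert_eq_cycVert_iff v (by omega) (by omega),
    cycVert_eq_cycVert_iff v (by omega) (by omega)] at hsub
  simp only [cycleRank]
  split_ifs <;> omega

variable [Fact (2 < n)]

theorem toCycleLeaf_compatible_iff (c d : Incidence n) :
    (c.toCycleLeaf v).Compatible (d.toCycleLeaf v) ↔ c.Compatible d := by
  rw [VPair.compatible_iff (cycleLeaf_lo_card v _) (cycleLeaf_lo_card v _)]
  rcases c with (_ | _) | f <;> rcases d with (_ | _) | g <;>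
    simp [toCycleLeaf, VPair.ofMem, Compatible, leafEdge_ne_cycEdge,
      (leafEdge_ne_cycEdge _ _).symm, cycVert_ne_inr, (cycVert_ne_inr _ _).symm,
      cycVert_succ_ne_inl, (cycVert_succ_ne_inl _ _).symm]
  rw [cycVert_succ_inj, cycEdge_inj v f.vtx_lt g.vtx_lt]

theorem toCycleLeaf_injective : Function.Injective (toCycleLeaf (n := n) v) := by
  intro c d h
  have hlo := congrArg VPair.lo h
  have hhi := congrArg VPair.hi h
  rcases c with (_ | _) | f <;> rcases d with (_ | _) | g <;>
    simp [toCycleLeaf, VPair.ofMem, leafEdge_ne_cycEdge, (leafEdge_ne_cycEdge _ _).symm,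
      cycVert_ne_inr, (cycVert_ne_inr _ _).symm] at hlo hhi ⊢
  exact PathFlag.ext (cycVert_succ_inj v |>.1 hlo) ((cycEdge_inj v f.vtx_lt g.vtx_lt).1 hhi)

end Incidence

section PathPlusEdge

variable {n : ℕ}

abbrev pathPlusEdge (n : ℕ) : SComplex (Fin n ⊕ Fin 2) :=
  sDisjUnion (graphComplex (SimpleGraph.pathGraph n)) (graphComplex (SimpleGraph.pathGraph 2))

def extraEdge : Finset (Fin n ⊕ Fin 2) := {.inr 0, .inr 1}

theorem extraEdge_mem_faces : (pathPlusEdge n).faces extraEdge := by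
  refine ⟨insert_nonempty _ _, _, Or.inr ⟨{0, 1}, ?_, by simp [extraEdge]⟩, subset_rfl⟩
  exact ⟨insert_nonempty _ _, _, Or.inr ⟨0, 1, by simp [SimpleGraph.pathGraph_adj], rfl⟩,
    subset_rfl⟩

theorem card_extraEdge : (extraEdge (n := n)).card = 2 := card_pair (by simp)

variable [NeZero n]

def pathVert (a : ℕ) : Fin n ⊕ Fin 2 := .inl (Fin.ofNat n a)

def pathEdge (a : ℕ) : Finset (Fin n ⊕ Fin 2) := {pathVert a, pathVert (a + 1)}

theorem pathVert_inj {a b : ℕ} (ha : a < n) (hb : b < n) :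
    pathVert (n := n) a = pathVert b ↔ a = b := by
  simp [pathVert, Fin.ext_iff, Nat.mod_eq_of_lt ha, Nat.mod_eq_of_lt hb]

theorem pathVert_ne_inr (a : ℕ) (z : Fin 2) : pathVert (n := n) a ≠ .inr z := Sum.inl_ne_inr

theorem pathEdge_inj {a b : ℕ} (ha : a + 1 < n) (hb : b + 1 < n) :
    pathEdge (n := n) a = pathEdge b ↔ a = b := by
  refine ⟨fun hab => ?_, fun hab => hab ▸ rfl⟩
  rw [pathEdge, pathEdge, ← coe_inj, coe_pair, coe_pair, Set.pair_eq_pair_iff,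
    pathVert_inj (by omega) (by omega), pathVert_inj (by omega) (by omega),
    pathVert_inj (by omega) (by omega), pathVert_inj (by omega) (by omega)] at hab
  omega

theorem pathEdge_mem_faces {a : ℕ} (ha : a + 1 < n) : (pathPlusEdge n).faces (pathEdge a) := by
  refine ⟨insert_nonempty _ _, _, Or.inl ⟨{Fin.ofNat n a, Fin.ofNat n (a + 1)}, ?_, rfl⟩,
    by simp [pathEdge, pathVert]⟩
  refine ⟨insert_nonempty _ _, _, Or.inr ⟨_, _, ?_, rfl⟩, subset_rfl⟩
  simp [SimpleGraph.pathGraph_adj, Nat.mod_eq_of_lt ha, Nat.mod_eq_of_lt (a.lt_succ_self.trans ha)]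

theorem card_pathEdge {a : ℕ} (ha : a + 1 < n) : (pathEdge (n := n) a).card = 2 :=
  card_pair fun h => by rw [pathVert_inj (by omega) ha] at h; omega

theorem extraEdge_ne_pathEdge (a : ℕ) : extraEdge ≠ pathEdge (n := n) a := by
  intro h
  have : (.inr 0 : Fin n ⊕ Fin 2) ∈ pathEdge a := h ▸ by simp [extraEdge]
  simp [pathEdge, pathVert] at this

theorem inl_eq_pathVert (x : Fin n) : .inl x = pathVert x.val := by simp [pathVert]

theorem pathPlusEdge_faces_subset [Fact (1 < n)] {σ : Finset (Fin n ⊕ Fin 2)}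
    (h : (pathPlusEdge n).faces σ) :
    σ ⊆ extraEdge ∨ ∃ a, a + 1 < n ∧ σ ⊆ pathEdge a := by
  obtain ⟨-, τ, ⟨α, hα, rfl⟩ | ⟨β, -, rfl⟩, hσ⟩ := h
  · obtain ⟨x, y, hxy, hα⟩ := graphComplex_faces_subset hα
    have himage : α.image .inl ⊆ {pathVert x.val, pathVert y.val} := by
      simpa [inl_eq_pathVert] using
        image_subset_image (f := (Sum.inl : Fin n → Fin n ⊕ Fin 2)) hα
    refine Or.inr ?_
    rcases hxy with rfl | hadj
    · by_cases hx : x.val + 1 < n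
      · exact ⟨x.val, hx, hσ.trans (himage.trans (by simp [pathEdge]))⟩
      · have := (Fact.out : 1 < n)
        refine ⟨x.val - 1, by omega, hσ.trans (himage.trans ?_)⟩
        simp [pathEdge, Nat.sub_add_cancel (show 1 ≤ x.val by omega)]
    · rcases SimpleGraph.pathGraph_adj.1 hadj with h | h
      · exact ⟨x.val, h ▸ y.isLt, hσ.trans (himage.trans (by simp [pathEdge, h]))⟩
      · refine ⟨y.val, h ▸ x.isLt, hσ.trans (himage.trans ?_)⟩
        rw [pair_comm]
        simp [pathEdge, h]
  · refine Or.inl (hσ.trans fun z hz => ?_)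
    obtain ⟨y, -, rfl⟩ := mem_image.1 hz
    fin_cases y <;> simp [extraEdge]

end PathPlusEdge

namespace Incidence

variable {n : ℕ} [NeZero n]

def toPathPlusEdge : Incidence n → VPair (pathPlusEdge n)
  | .inl true => .ofMem _ (.inr 0) extraEdge extraEdge_mem_faces (by simp [extraEdge])
      card_extraEdge
  | .inl false => .ofMem _ (.inr 1) extraEdge extraEdge_mem_faces (by simp [extraEdge])
      card_extraEdge
  | .inr f => .ofMem _ (pathVert f.vtx) (pathEdge f.edge) (pathEdge_mem_faces f.edge_succ_lt)
      (by rcases f.vtx_eq with h | h <;> simp [pathEdge, h]) (card_pathEdge f.edge_succ_lt)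

theorem toPathPlusEdge_lo_card (c : Incidence n) : c.toPathPlusEdge.lo.card = 1 := by
  rcases c with (_ | _) | _ <;> exact card_singleton _

theorem toPathPlusEdge_compatible_iff (c d : Incidence n) :
    c.toPathPlusEdge.Compatible d.toPathPlusEdge ↔ c.Compatible d := by
  rw [VPair.compatible_iff (toPathPlusEdge_lo_card c) (toPathPlusEdge_lo_card d)]
  rcases c with (_ | _) | f <;> rcases d with (_ | _) | g <;>
    simp [toPathPlusEdge, VPair.ofMem, Compatible, extraEdge_ne_pathEdge,
      (extraEdge_ne_pathEdge _).symm, pathVert_ne_inr, (pathVert_ne_inr _ _).symm]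
  rw [pathVert_inj f.vtx_lt g.vtx_lt, pathEdge_inj f.edge_succ_lt g.edge_succ_lt]
  tauto

theorem toPathPlusEdge_injective : Function.Injective (toPathPlusEdge (n := n)) := by
  intro c d h
  have hlo := congrArg VPair.lo h
  have hhi := congrArg VPair.hi h
  rcases c with (_ | _) | f <;> rcases d with (_ | _) | g <;>
    simp [toPathPlusEdge, VPair.ofMem, pathVert_ne_inr, (pathVert_ne_inr _ _).symm] at hlo hhi ⊢
  exact PathFlag.ext ((pathEdge_inj f.edge_succ_lt g.edge_succ_lt).1 hhi)
    ((pathVert_inj f.vtx_lt g.vtx_lt).1 hlo)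

theorem exists_toPathPlusEdge_eq [Fact (1 < n)] (p : VPair (pathPlusEdge n)) :
    ∃ c : Incidence n, c.toPathPlusEdge = p := by
  rcases pathPlusEdge_faces_subset p.hi_face with h | ⟨a, ha, h⟩
  · obtain ⟨hhi, hlo | hlo⟩ := p.eq_pair_of_hi_subset h
    · exact ⟨.inl true, VPair.ext hlo.symm hhi.symm⟩
    · exact ⟨.inl false, VPair.ext hlo.symm hhi.symm⟩
  · obtain ⟨hhi, hlo | hlo⟩ := p.eq_pair_of_hi_subset h
    · exact ⟨.inr ⟨a, a, ha, Or.inl rfl⟩, VPair.ext hlo.symm hhi.symm⟩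
    · exact ⟨.inr ⟨a, a + 1, ha, Or.inr rfl⟩, VPair.ext hlo.symm hhi.symm⟩

theorem pathRank_lt {c d : Incidence n} (hsub : d.toPathPlusEdge.lo ⊆ c.toPathPlusEdge.hi)
    (hlo : d.toPathPlusEdge.lo ≠ c.toPathPlusEdge.lo)
    (hhi : d.toPathPlusEdge.hi ≠ c.toPathPlusEdge.hi) : c.pathRank < d.pathRank := by
  rcases c with (_ | _) | f <;> rcases d with (_ | _) | g
  any_goals exact absurd rfl hhi
  any_goals
    simp [toPathPlusEdge, VPair.ofMem, extraEdge, pathEdge, pathVert_ne_inr,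
      (pathVert_ne_inr _ _).symm] at hsub; done
  have := f.edge_succ_lt; have := g.edge_succ_lt; have := f.vtx_eq; have := g.vtx_eq
  have hlo' : g.vtx ≠ f.vtx := fun h => hlo (by simp [toPathPlusEdge, VPair.ofMem, h])
  have hhi' : g.edge ≠ f.edge := fun h => hhi (by simp [toPathPlusEdge, VPair.ofMem, h])
  simp only [toPathPlusEdge, VPair.ofMem, singleton_subset_iff, pathEdge, mem_insert,
    mem_singleton] at hsub
  rw [pathVert_inj (by omega) (by omega), pathVert_inj (by omega) (by omega)] at hsub
  simp only [pathRank]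
  split_ifs <;> omega

end Incidence

section Morse

variable {n : ℕ} [Fact (1 < n)] (v : ZMod n)

theorem cycleLeaf_not_hasClosedPath {σ : Finset (VPair (cycleLeaf n v))}
    (hσ : IsDVF {p | p ∈ σ}) (hup : baseUp v ∉ σ) (hdown : baseDown v ∉ σ) :
    ¬ HasClosedPath {p | p ∈ σ} :=
  not_hasClosedPath_of_rank hσ (Incidence.toCycleLeaf v)
    (fun p hp => Incidence.exists_toCycleLeaf_eq v p (fun h => hup (h ▸ hp))
      (fun h => hdown (h ▸ hp)))
    Incidence.cycleRank fun _ _ => Incidence.cycleRank_lt v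

theorem pathPlusEdge_not_hasClosedPath {σ : Finset (VPair (pathPlusEdge n))}
    (hσ : IsDVF {p | p ∈ σ}) : ¬ HasClosedPath {p | p ∈ σ} :=
  not_hasClosedPath_of_rank hσ Incidence.toPathPlusEdge
    (fun p _ => Incidence.exists_toPathPlusEdge_eq p) Incidence.pathRank
    fun _ _ => Incidence.pathRank_lt

abbrev leafBase : VPair (cycleLeaf n v) := Incidence.toCycleLeaf v (.inl true)

abbrev leafTip : VPair (cycleLeaf n v) := Incidence.toCycleLeaf v (.inl false)

theorem eq_leafBase_or_leafTip {p : VPair (cycleLeaf n v)} (h : .inr () ∈ p.hi) :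
    p = leafBase v ∨ p = leafTip v := by
  rcases cycleLeaf_faces_subset v p.hi_face with hsub | ⟨a, -, hsub⟩
  · obtain ⟨hhi, hlo | hlo⟩ := p.eq_pair_of_hi_subset hsub
    · exact Or.inl (VPair.ext hlo hhi)
    · exact Or.inr (VPair.ext hlo hhi)
  · exact absurd (hsub h) (inr_notMem_cycEdge v a)

theorem leafBase_notMem {σ : Finset (VPair (cycleLeaf n v))} (hσ : IsDVF {p | p ∈ σ})
    {p : VPair (cycleLeaf n v)} (hp : p ∈ σ) (hlo : p.lo = {.inl v})
    (hhi : p.hi ≠ leafEdge v) : leafBase v ∉ σ :=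
  fun ha => (hσ _ ha _ hp (Incidence.toCycleLeaf_ne v hlo hhi _)).1 hlo.symm

/-- The tip flag is compatible with every flag but `leafBase`, and nothing leads into it. -/
theorem morseComplex_faces_insert_leafTip {σ : Finset (VPair (cycleLeaf n v))}
    (hσ : (MorseComplex (cycleLeaf n v)).faces σ) (ha : leafBase v ∉ σ) :
    (MorseComplex (cycleLeaf n v)).faces (insert (leafTip v) σ) := by
  obtain ⟨-, hdvf, hacyc⟩ := hσ
  have hinr : ∀ q ∈ σ, q ≠ leafTip v → .inr () ∉ q.hi := fun q hq hqt h =>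
    (eq_leafBase_or_leafTip v h).elim (fun h => ha (h ▸ hq)) hqt
  have hcompat : ∀ q ∈ σ, q ≠ leafTip v → (leafTip v).Compatible q := fun q hq hqt => by
    rw [VPair.compatible_iff (cycleLeaf_lo_card v _) (cycleLeaf_lo_card v _)]
    exact ⟨fun h => hinr q hq hqt (q.lo_sub (h ▸ by simp [Incidence.toCycleLeaf, VPair.ofMem])),
      fun h => hinr q hq hqt (h ▸ by simp [Incidence.toCycleLeaf, VPair.ofMem, leafEdge])⟩
  refine ⟨insert_nonempty _ _, ?_, fun h => hacyc (h.of_insert ?_)⟩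
  · simp only [IsDVF, Set.mem_ofPred_eq, mem_insert]
    rintro p (rfl | hp) q (rfl | hq) hpq
    · exact absurd rfl hpq
    · exact hcompat q hq (Ne.symm hpq)
    · exact (hcompat p hp hpq).symm
    · exact hdvf p hp q hq hpq
  · intro p hp hsub
    rcases eq_leafBase_or_leafTip v (hsub (by simp [Incidence.toCycleLeaf, VPair.ofMem]))
      with rfl | rfl
    · obtain h | h := mem_insert.1 hp
      · simp [Incidence.toCycleLeaf, VPair.ofMem] at h
      · exact absurd h ha
    · rfl

def cutMorse : Finset (VPair (cycleLeaf n v)) → Prop :=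
  fun σ => ((MorseComplex (cycleLeaf n v)).faces σ ∧ baseUp v ∉ σ) ∧ baseDown v ∉ σ

/-- `leafTip` dominates `baseUp` and `baseDown`: a facet containing one of them cannot contain
`leafBase`, so it contains `leafTip`. -/
theorem scTo_cutMorse [Fact (2 < n)] :
    SCTo (MorseComplex (cycleLeaf n v)).faces (cutMorse v) := by
  have hup : (baseUp v).hi ≠ leafEdge v := (leafEdge_ne_cycEdge v 0).symm
  have hdown : (baseDown v).hi ≠ leafEdge v := (leafEdge_ne_cycEdge v _).symm
  have htip_up := Incidence.toCycleLeaf_ne v rfl hup (.inl false)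
  have hup_down : baseUp v ≠ baseDown v := fun h => by
    have := (Fact.out : 2 < n)
    have := (cycEdge_inj v (by omega) (by omega)).1 (congrArg VPair.hi h)
    omega
  refine .step _ _ _ _ htip_up (MorseComplex.faces_singleton_s11 _) (MorseComplex.faces_singleton_s11 _)
    ?_ (.step _ _ (leafTip v) (baseDown v) (Incidence.toCycleLeaf_ne v rfl hdown _)
      ⟨MorseComplex.faces_singleton_s11 _, by simpa using htip_up.symm⟩
      ⟨MorseComplex.faces_singleton_s11 _, by simpa using hup_down⟩ ?_ (.refl _))
  · exact dominates_of_insert fun σ hσ hσup =>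
      morseComplex_faces_insert_leafTip v hσ (leafBase_notMem v hσ.2.1 hσup rfl hup)
  · exact dominates_of_insert fun σ ⟨hσ, hσup⟩ hσdown =>
      ⟨morseComplex_faces_insert_leafTip v hσ (leafBase_notMem v hσ.2.1 hσdown rfl hdown),
        by simpa [hσup] using htip_up.symm⟩

end Morse

section Iso

variable {n : ℕ} [Fact (2 < n)] (v : ZMod n)

noncomputable def cutOpen (p : VPair (cycleLeaf n v)) : VPair (pathPlusEdge n) :=
  (Function.invFun (Incidence.toCycleLeaf v) p).toPathPlusEdge

noncomputable def closeUp (q : VPair (pathPlusEdge n)) : VPair (cycleLeaf n v) :=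
  (Function.invFun Incidence.toPathPlusEdge q).toCycleLeaf v

theorem cutOpen_toCycleLeaf (c : Incidence n) :
    cutOpen v (c.toCycleLeaf v) = c.toPathPlusEdge := by
  rw [cutOpen, Function.leftInverse_invFun (Incidence.toCycleLeaf_injective v)]

theorem closeUp_toPathPlusEdge (c : Incidence n) :
    closeUp v c.toPathPlusEdge = c.toCycleLeaf v := by
  rw [closeUp, Function.leftInverse_invFun Incidence.toPathPlusEdge_injective]

theorem cutOpen_compatible {p q : VPair (cycleLeaf n v)}
    (hp : ∃ c : Incidence n, c.toCycleLeaf v = p) (hq : ∃ d : Incidence n, d.toCycleLeaf v = q)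
    (h : p.Compatible q) :
    (cutOpen v p).Compatible (cutOpen v q) := by
  obtain ⟨c, rfl⟩ := hp
  obtain ⟨d, rfl⟩ := hq
  rwa [cutOpen_toCycleLeaf, cutOpen_toCycleLeaf, Incidence.toPathPlusEdge_compatible_iff,
    ← Incidence.toCycleLeaf_compatible_iff v]

theorem closeUp_compatible {p q : VPair (pathPlusEdge n)} (h : p.Compatible q) :
    (closeUp v p).Compatible (closeUp v q) := by
  obtain ⟨c, rfl⟩ := Incidence.exists_toPathPlusEdge_eq p
  obtain ⟨d, rfl⟩ := Incidence.exists_toPathPlusEdge_eq q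
  rwa [closeUp_toPathPlusEdge, closeUp_toPathPlusEdge, Incidence.toCycleLeaf_compatible_iff,
    ← Incidence.toPathPlusEdge_compatible_iff]

theorem notMem_fimage_closeUp {p : VPair (cycleLeaf n v)} (hlo : p.lo = {.inl v})
    (hhi : p.hi ≠ leafEdge v) (τ : Finset (VPair (pathPlusEdge n))) :
    p ∉ fimage (closeUp v) τ := fun h => by
  obtain ⟨q, -, hq⟩ := mem_fimage.1 h
  exact Incidence.toCycleLeaf_ne v hlo hhi _ hq

noncomputable def cutMorseIso :
    ComplexIso (cutMorse v) (MorseComplex (pathPlusEdge n)).faces where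
  toFun := cutOpen v
  invFun := closeUp v
  left_inv x hx := by
    obtain ⟨c, rfl⟩ := Incidence.exists_toCycleLeaf_eq v x
      (fun h => hx.1.2 (h ▸ mem_singleton_self x)) (fun h => hx.2 (h ▸ mem_singleton_self x))
    rw [cutOpen_toCycleLeaf, closeUp_toPathPlusEdge]
  right_inv y _ := by
    obtain ⟨c, rfl⟩ := Incidence.exists_toPathPlusEdge_eq y
    rw [closeUp_toPathPlusEdge, cutOpen_toCycleLeaf]
  map_face σ hσ := by
    obtain ⟨⟨⟨hne, hdvf, -⟩, hup⟩, hdown⟩ := hσ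
    have hrange : ∀ p ∈ σ, ∃ c : Incidence n, c.toCycleLeaf v = p := fun p hp =>
      Incidence.exists_toCycleLeaf_eq v p (fun h => hup (h ▸ hp)) (fun h => hdown (h ▸ hp))
    have hdvf' := hdvf.fimage (cutOpen v) fun p hp q hq =>
      cutOpen_compatible v (hrange p hp) (hrange q hq)
    exact ⟨hne.fimage _, hdvf', pathPlusEdge_not_hasClosedPath hdvf'⟩
  inv_face τ hτ := by
    obtain ⟨hne, hdvf, -⟩ := hτ
    have hdvf' := hdvf.fimage (closeUp v) fun _ _ _ _ => closeUp_compatible v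
    have hup := notMem_fimage_closeUp v (p := baseUp v) rfl (leafEdge_ne_cycEdge v 0).symm τ
    have hdown := notMem_fimage_closeUp v (p := baseDown v) rfl (leafEdge_ne_cycEdge v _).symm τ
    exact ⟨⟨⟨hne.fimage _, hdvf', cycleLeaf_not_hasClosedPath v hdvf' hup hdown⟩, hup⟩,
      hdown⟩

end Iso

/-- `M(C_n ∨_v ℓ)` strongly collapses to a complex isomorphic to
`M(P_{n-1} ⊔ ℓ)`. -/
theorem stmt_11 (n : ℕ) (hn : 3 ≤ n) (v : ZMod n) :
    ∃ G, SCTo (MorseComplex (attachLeaf (graphComplex (cycleGraph n)) v)).faces G ∧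
      Nonempty (ComplexIso G
        (MorseComplex (sDisjUnion (graphComplex (SimpleGraph.pathGraph n))
          (graphComplex (SimpleGraph.pathGraph 2)))).faces) := by
  have : Fact (2 < n) := ⟨hn⟩
  exact ⟨cutMorse v, scTo_cutMorse v, ⟨cutMorseIso v⟩⟩
end

section
/- Let X be a finite poset that decomposes as a disjoint union X = A ⊔ B. If the generalized Morse complex f(A) of A is strongly collapsible, then the generalized Morse complex f(X) is strongly collapsible. -/
open Finset

/-!
Since `s` is a union of connected components of `P`, a Hasse edge lies either in `A = s` or in
`B = sᶜ`, edges on different sides are always compatible, and a cycle of an acyclic matching never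
changes sides. Hence `f(X)` is the join `f(A) * f(B)`, and the Hasse edges of `A` span a copy of
`f(A)` inside it. In a join `K * L`, a vertex dominated in `K` stays dominated, so the strong
collapse of `K` carries over to `K * L` and ends at a cone `v * L`, in which the apex `v`
dominates every vertex of `L`.
-/

namespace SCAux

variable {V W : Type*}

theorem of_iff {F G : Finset V → Prop} (h : ∀ σ, F σ ↔ G σ) (hF : SCAux F) : SCAux G :=
  (funext fun σ => propext (h σ)) ▸ hF

theorem map (e : V ↪ W) {F : Finset V → Prop} (hF : SCAux F) :
    ∀ {G : Finset W → Prop}, (∀ τ, G τ ↔ ∃ σ, F σ ∧ σ.map e = τ) → SCAux G := by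
  induction hF with
  | point F v hv =>
    intro G hG
    refine point G (e v) fun τ => ?_
    simp only [hG, hv, exists_eq_left, Finset.map_singleton, eq_comm]
  | step F w w' hne hw hw' hdom _ ih =>
    intro G hG
    refine step G (e w) (e w') (e.injective.ne hne) ((hG _).2 ⟨_, hw, Finset.map_singleton e w⟩)
      ((hG _).2 ⟨_, hw', Finset.map_singleton e w'⟩) ?_ (ih fun τ => ?_)
    · rintro τ ⟨hτ, hmax⟩ hw'τ
      obtain ⟨σ, hσ, rfl⟩ := (hG τ).1 hτ
      have hσmax : ∀ σ', F σ' → σ ⊆ σ' → σ = σ' := fun σ' hσ' hsub =>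
        Finset.map_injective e (hmax _ ((hG _).2 ⟨σ', hσ', rfl⟩) (Finset.map_subset_map.2 hsub))
      exact Finset.mem_map_of_mem e (hdom σ ⟨hσ, hσmax⟩ ((Finset.mem_map' e).1 hw'τ))
    · rw [hG]
      constructor
      · rintro ⟨⟨σ, hσ, rfl⟩, hw'σ⟩
        exact ⟨σ, ⟨hσ, fun h => hw'σ (Finset.mem_map_of_mem e h)⟩, rfl⟩
      · rintro ⟨σ, ⟨hσ, hw'σ⟩, rfl⟩
        exact ⟨⟨σ, hσ, rfl⟩, (Finset.mem_map' e).not.2 hw'σ⟩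

end SCAux

theorem SComplex.nonempty_of_faces_s17 {V : Type*} {K : SComplex V} {σ : Finset V}
    (hσ : K.faces σ) : σ.Nonempty :=
  Finset.nonempty_iff_ne_empty.2 fun h => K.not_empty (h ▸ hσ)

section FullyConnected

variable {V : Type*} {K : SComplex V} {S U U' : Set V}

theorem restrictTo_mono (hU : U ⊆ U') {σ : Finset V} (hσ : restrictTo K U σ) :
    restrictTo K U' σ :=
  ⟨hσ.1, fun x hx => hU (hσ.2 x hx)⟩

theorem restrictTo_and_notMem_iff {w : V} {σ : Finset V} :
    (restrictTo K U σ ∧ w ∉ σ) ↔ restrictTo K (U \ {w}) σ := by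
  refine ⟨fun ⟨⟨hσ, hσU⟩, hw⟩ => ⟨hσ, fun x hx => ⟨hσU x hx, ?_⟩⟩,
    fun ⟨hσ, hσU⟩ => ⟨⟨hσ, fun x hx => (hσU x hx).1⟩, fun hw => (hσU w hw).2 rfl⟩⟩
  rintro rfl
  exact hw hx

theorem SComplex.faces_or_eq_empty_filter (K : SComplex V) {σ : Finset V} (hσ : K.faces σ)
    (p : V → Prop) [DecidablePred p] : K.faces (σ.filter p) ∨ σ.filter p = ∅ := by
  rcases (σ.filter p).eq_empty_or_nonempty with h | h
  · exact Or.inr h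
  · exact Or.inl (K.down_closed hσ (Finset.filter_subset p σ) h)

variable [DecidableEq V]

theorem fullyConnected_of_faces_union
    (h : ∀ α β, restrictTo K S α → K.faces β → (∀ x ∈ β, x ∉ S) → K.faces (α ∪ β)) :
    FullyConnected K S := by
  classical
  intro σ
  constructor
  · intro hσ
    refine ⟨SComplex.nonempty_of_faces_s17 hσ, σ.filter (· ∈ S), σ.filter (· ∉ S), ?_, ?_,
      (Finset.filter_union_filter_not_eq _ σ).symm⟩
    · exact (K.faces_or_eq_empty_filter hσ _).imp_left fun hα =>
        ⟨hα, fun x hx => (Finset.mem_filter.1 hx).2⟩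
    · exact (K.faces_or_eq_empty_filter hσ _).imp_left fun hβ =>
        ⟨hβ, fun x hx => (Finset.mem_filter.1 hx).2⟩
  · rintro ⟨hne, α, β, hα | rfl, ⟨hβ, hβS⟩ | rfl, rfl⟩
    · exact h α β hα hβ hβS
    · simpa using hα.1
    · simpa using hβ
    · simp at hne

theorem FullyConnected.faces_union_of_subset (hK : FullyConnected K S) {σ τ : Finset V}
    (hσ : K.faces σ) (hτ : restrictTo K S τ) (hsub : ∀ x ∈ σ, x ∈ S → x ∈ τ) :
    K.faces (σ ∪ τ) := by
  classical
  refine (hK _).2 ⟨(SComplex.nonempty_of_faces_s17 hσ).mono Finset.subset_union_left, τ,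
    σ.filter (· ∉ S), Or.inl hτ, ?_, ?_⟩
  · exact (K.faces_or_eq_empty_filter hσ _).imp_left fun hβ =>
      ⟨hβ, fun x hx => (Finset.mem_filter.1 hx).2⟩
  · ext x
    by_cases hx : x ∈ S <;> simp only [Finset.mem_union, Finset.mem_filter, hx] <;> grind

theorem FullyConnected.scAux_restrictTo_union_of_eq_singleton (hK : FullyConnected K S)
    (hUS : U ⊆ S) {v : V} (hv : ∀ σ, restrictTo K U σ ↔ σ = {v}) (R : Finset V)
    (hR : ∀ q ∈ R, q ∉ S ∧ K.faces {q}) : SCAux (restrictTo K (U ∪ R)) := by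
  induction R using Finset.induction_on with
  | empty => simpa using SCAux.point _ v hv
  | insert q R hqR ih =>
    obtain ⟨hqS, hq⟩ := hR q (Finset.mem_insert_self q R)
    have hvU : restrictTo K U {v} := (hv _).2 rfl
    have hvS : v ∈ S := hUS (hvU.2 v (Finset.mem_singleton_self v))
    have hU : U ∪ ↑(insert q R) = insert q (U ∪ R) := by
      rw [Finset.coe_insert, Set.union_insert]
    rw [hU]
    refine SCAux.step _ v q (fun h => hqS (h ▸ hvS)) (restrictTo_mono ?_ hvU)
      ⟨hq, by simp⟩ ?_ ((ih fun x hx => hR x (Finset.mem_insert_of_mem hx)).of_iff fun σ => ?_)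
    · exact Set.subset_union_left.trans (Set.subset_insert _ _)
    · -- `v` is the only vertex in `S`, so it can be added to every face: it is a cone point
      rintro σ ⟨⟨hσ, hσU⟩, hmax⟩ -
      have hσS : ∀ x ∈ σ, x ∈ S → x ∈ ({v} : Finset V) := by
        intro x hx hxS
        rcases hσU x hx with rfl | hxU | hxR
        · exact absurd hxS hqS
        · exact (hv {x}).1 ⟨K.down_closed hσ (by simpa using hx) (by simp),
            by simpa using hxU⟩ ▸ Finset.mem_singleton_self x
        · exact absurd hxS (hR x (Finset.mem_insert_of_mem hxR)).1
      have hσv : restrictTo K (insert q (U ∪ ↑R)) (σ ∪ {v}) := by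
        refine ⟨hK.faces_union_of_subset hσ (restrictTo_mono hUS hvU) hσS, fun x hx => ?_⟩
        rcases Finset.mem_union.1 hx with hx | hx
        · exact hσU x hx
        · exact Or.inr (Or.inl (hvU.2 x hx))
      rw [hmax _ hσv Finset.subset_union_left]
      simp
    · rw [restrictTo_and_notMem_iff, Set.insert_sdiff_self_of_notMem]
      rintro (hqU | hqR')
      · exact hqS (hUS hqU)
      · exact hqR hqR'

theorem FullyConnected.scAux_restrictTo_union (hK : FullyConnected K S) (R : Finset V)
    (hR : ∀ q ∈ R, q ∉ S ∧ K.faces {q}) {F : Finset V → Prop} (hF : SCAux F) :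
    ∀ {U : Set V}, U ⊆ S → (∀ σ, F σ ↔ restrictTo K U σ) → SCAux (restrictTo K (U ∪ R)) := by
  induction hF with
  | point F v hv =>
    intro U hUS hFU
    exact hK.scAux_restrictTo_union_of_eq_singleton hUS (fun σ => (hFU σ).symm.trans (hv σ)) R hR
  | step F w w' hne hw hw' hdom _ ih =>
    intro U hUS hFU
    have hw'S : w' ∈ S := hUS (((hFU _).1 hw').2 w' (Finset.mem_singleton_self w'))
    have hUR : ∀ {x}, x ∈ U ∪ R → x ∈ S → x ∈ U := fun {x} hx hxS =>
      hx.resolve_right fun hxR => (hR x hxR).1 hxS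
    refine SCAux.step _ w w' hne (restrictTo_mono Set.subset_union_left ((hFU _).1 hw))
      (restrictTo_mono Set.subset_union_left ((hFU _).1 hw')) ?_
      ((ih (U := U \ {w'}) (Set.sdiff_subset.trans hUS) fun σ => ?_).of_iff fun σ => ?_)
    · -- the part in `S` of a facet containing `w'` is a facet of `F`, where `w` dominates `w'`
      rintro σ ⟨⟨hσ, hσU⟩, hmax⟩ hw'σ
      classical
      set α := σ.filter (· ∈ S)
      have hw'α : w' ∈ α := Finset.mem_filter.2 ⟨hw'σ, hw'S⟩
      have hα : restrictTo K U α := by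
        refine ⟨K.down_closed hσ (Finset.filter_subset _ σ) ⟨w', hw'α⟩, fun x hx => ?_⟩
        obtain ⟨hxσ, hxS⟩ := Finset.mem_filter.1 hx
        exact hUR (hσU x hxσ) hxS
      have hαmax : ∀ τ, F τ → α ⊆ τ → α = τ := by
        intro τ hτ hατ
        obtain ⟨hτK, hτU⟩ := (hFU τ).1 hτ
        have hστ : restrictTo K (U ∪ R) (σ ∪ τ) := by
          refine ⟨hK.faces_union_of_subset hσ ⟨hτK, fun x hx => hUS (hτU x hx)⟩
            fun x hx hxS => hατ (Finset.mem_filter.2 ⟨hx, hxS⟩), fun x hx => ?_⟩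
          rcases Finset.mem_union.1 hx with hx | hx
          · exact hσU x hx
          · exact Or.inl (hτU x hx)
        have hτσ : τ ⊆ σ := (hmax _ hστ Finset.subset_union_left).symm ▸ Finset.subset_union_right
        exact hατ.antisymm fun x hx => Finset.mem_filter.2 ⟨hτσ hx, hUS (hτU x hx)⟩
      exact (Finset.mem_filter.1 (hdom α ⟨(hFU α).2 hα, hαmax⟩ hw'α)).1
    · exact (and_congr_left' (hFU σ)).trans restrictTo_and_notMem_iff
    · rw [restrictTo_and_notMem_iff, Set.union_sdiff_distrib,
        Set.sdiff_singleton_eq_self fun hw'R => (hR w' hw'R).1 hw'S]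

theorem FullyConnected.stronglyCollapsible [Finite V] (hK : FullyConnected K S)
    (hS : SCAux (restrictTo K S)) : StronglyCollapsible K := by
  classical
  set R := (Set.toFinite {q | q ∉ S ∧ K.faces {q}}).toFinset
  refine (hK.scAux_restrictTo_union R (fun q hq => by simpa [R] using hq) hS subset_rfl
    fun σ => Iff.rfl).of_iff fun σ => ⟨And.left, fun hσ => ⟨hσ, fun x hx => ?_⟩⟩
  by_cases hxS : x ∈ S
  · exact Or.inl hxS
  · exact Or.inr (by simpa [R] using ⟨hxS, K.down_closed hσ (by simpa using hx) (by simp)⟩)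

end FullyConnected

section Poset

variable {P : Type*} [PartialOrder P]

attribute [ext] HEdge

instance [Finite P] : Finite (HEdge P) :=
  Finite.of_injective (fun p : HEdge P => (p.lo, p.hi)) fun p q h => by
    obtain ⟨hlo, hhi⟩ := Prod.mk.inj h
    exact HEdge.ext hlo hhi

theorem HEdge.Compat.symm {p q : HEdge P} (h : p.Compat q) : q.Compat p :=
  ⟨h.1.symm, h.2.2.1.symm, h.2.1.symm, h.2.2.2.symm⟩

variable {s : Set P}

theorem Set.OrdConnected.coe_covBy_coe_iff (hs : s.OrdConnected) {a b : s} :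
    (a : P) ⋖ b ↔ a ⋖ b :=
  Set.OrdConnected.apply_covBy_apply_iff (OrderEmbedding.subtype (· ∈ s)) (by simpa using hs)

def HEdge.liftSubtype (hs : s.OrdConnected) : HEdge {x : P // x ∈ s} ↪ HEdge P where
  toFun p := ⟨p.lo, p.hi, hs.coe_covBy_coe_iff.2 p.cov⟩
  inj' p q h := by
    obtain ⟨hlo, hhi⟩ := HEdge.ext_iff.1 h
    exact HEdge.ext (Subtype.ext hlo) (Subtype.ext hhi)

variable (hs : s.OrdConnected)

@[simp]
theorem HEdge.liftSubtype_lo (p : HEdge {x : P // x ∈ s}) : (liftSubtype hs p).lo = p.lo := rfl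

@[simp]
theorem HEdge.liftSubtype_hi (p : HEdge {x : P // x ∈ s}) : (liftSubtype hs p).hi = p.hi := rfl

theorem HEdge.compat_liftSubtype_iff {p q : HEdge {x : P // x ∈ s}} :
    (liftSubtype hs p).Compat (liftSubtype hs q) ↔ p.Compat q := by
  simp only [HEdge.Compat, liftSubtype_lo, liftSubtype_hi, ne_eq, Subtype.val_inj]

theorem hasPosetCycle_map_liftSubtype_iff {σ : Finset (HEdge {x : P // x ∈ s})} :
    HasPosetCycle {p | p ∈ σ.map (HEdge.liftSubtype hs)} ↔ HasPosetCycle {p | p ∈ σ} := by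
  constructor
  · rintro ⟨k, hk, c, hc, hcyc⟩
    choose d hdσ hdc using fun i => Finset.mem_map.1 (hc i)
    refine ⟨k, hk, d, hdσ, fun i => ⟨hs.coe_covBy_coe_iff.1 ?_, fun h => (hcyc i).2 ?_⟩⟩
    · simpa only [← hdc, HEdge.liftSubtype_lo, HEdge.liftSubtype_hi] using (hcyc i).1
    · rw [← hdc, ← hdc, HEdge.liftSubtype_lo, HEdge.liftSubtype_lo, h]
  · rintro ⟨k, hk, c, hc, hcyc⟩
    exact ⟨k, hk, fun i => HEdge.liftSubtype hs (c i), fun i => Finset.mem_map_of_mem _ (hc i),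
      fun i => ⟨hs.coe_covBy_coe_iff.2 (hcyc i).1, fun h => (hcyc i).2 (Subtype.ext h)⟩⟩

theorem genMorse_faces_map_liftSubtype_iff {σ : Finset (HEdge {x : P // x ∈ s})} :
    (genMorse P).faces (σ.map (HEdge.liftSubtype hs)) ↔ (genMorse {x : P // x ∈ s}).faces σ := by
  simp only [genMorse, Finset.map_nonempty, Finset.forall_mem_map, ne_eq,
    (HEdge.liftSubtype hs).injective.eq_iff, HEdge.compat_liftSubtype_iff,
    hasPosetCycle_map_liftSubtype_iff]

theorem restrictTo_genMorse_range_liftSubtype_iff (τ : Finset (HEdge P)) :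
    restrictTo (genMorse P) (Set.range (HEdge.liftSubtype hs)) τ ↔
      ∃ σ, (genMorse {x : P // x ∈ s}).faces σ ∧ σ.map (HEdge.liftSubtype hs) = τ := by
  constructor
  · rintro ⟨hτ, hτS⟩
    have hmap : (τ.preimage _ (HEdge.liftSubtype hs).injective.injOn).map
        (HEdge.liftSubtype hs) = τ := by
      ext q
      simp only [Finset.mem_map, Finset.mem_preimage]
      refine ⟨fun ⟨p, hp, hpq⟩ => hpq ▸ hp, fun hq => ?_⟩
      obtain ⟨p, rfl⟩ := hτS q hq
      exact ⟨p, hq, rfl⟩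
    exact ⟨_, (genMorse_faces_map_liftSubtype_iff hs).1 (by rwa [hmap]), hmap⟩
  · rintro ⟨σ, hσ, rfl⟩
    exact ⟨(genMorse_faces_map_liftSubtype_iff hs).2 hσ, fun p hp => by
      obtain ⟨q, -, rfl⟩ := Finset.mem_map.1 hp
      exact Set.mem_range_self q⟩

theorem HEdge.mem_range_liftSubtype_iff (hsplit : ∀ a b : P, a ≤ b → (a ∈ s ↔ b ∈ s))
    (q : HEdge P) : q ∈ Set.range (liftSubtype hs) ↔ q.lo ∈ s := by
  refine ⟨fun ⟨p, hp⟩ => hp ▸ p.lo.2, fun hq => ?_⟩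
  have hq' : q.hi ∈ s := (hsplit _ _ q.cov.le).1 hq
  exact ⟨⟨⟨q.lo, hq⟩, ⟨q.hi, hq'⟩, hs.coe_covBy_coe_iff.1 q.cov⟩, rfl⟩

theorem HEdge.compat_of_lo_mem_of_lo_notMem (hsplit : ∀ a b : P, a ≤ b → (a ∈ s ↔ b ∈ s))
    {p q : HEdge P} (hp : p.lo ∈ s) (hq : q.lo ∉ s) : p.Compat q := by
  have hp' : p.hi ∈ s := (hsplit _ _ p.cov.le).1 hp
  have hq' : q.hi ∉ s := fun h => hq ((hsplit _ _ q.cov.le).2 h)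
  exact ⟨fun h => hq (h ▸ hp), fun h => hq' (h ▸ hp), fun h => hq (h ▸ hp'),
    fun h => hq' (h ▸ hp')⟩

theorem hasPosetCycle_union (hsplit : ∀ a b : P, a ≤ b → (a ∈ s ↔ b ∈ s))
    {α β : Finset (HEdge P)} (hα : ∀ p ∈ α, p.lo ∈ s) (hβ : ∀ q ∈ β, q.lo ∉ s)
    (h : HasPosetCycle {p | p ∈ α ∪ β}) :
    HasPosetCycle {p | p ∈ α} ∨ HasPosetCycle {p | p ∈ β} := by
  obtain ⟨k, hk, c, hc, hcyc⟩ := h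
  -- consecutive edges of a cycle are comparable, so the whole cycle lies on one side of the split
  have hper : Function.Periodic (fun i => (c i).lo ∈ s) 1 := fun i =>
    propext ((hsplit _ _ (hcyc i).1.le).trans (hsplit _ _ (c i).cov.le).symm)
  have hside : ∀ i, (c i).lo ∈ s ↔ (c 0).lo ∈ s := by
    intro i
    obtain ⟨z, rfl⟩ := ZMod.intCast_surjective i
    simpa using hper.int_mul z 0
  by_cases h0 : (c 0).lo ∈ s
  · exact Or.inl ⟨k, hk, c, fun i => (Finset.mem_union.1 (hc i)).resolve_right
      fun hi => hβ _ hi ((hside i).2 h0), hcyc⟩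
  · exact Or.inr ⟨k, hk, c, fun i => (Finset.mem_union.1 (hc i)).resolve_left
      fun hi => h0 ((hside i).1 (hα _ hi)), hcyc⟩

theorem fullyConnected_genMorse_range_liftSubtype
    (hsplit : ∀ a b : P, a ≤ b → (a ∈ s ↔ b ∈ s)) :
    FullyConnected (genMorse P) (Set.range (HEdge.liftSubtype hs)) := by
  refine fullyConnected_of_faces_union fun α β ⟨⟨hαne, hαm, hαc⟩, hαS⟩ ⟨_, hβm, hβc⟩ hβS => ?_
  simp only [HEdge.mem_range_liftSubtype_iff hs hsplit] at hαS hβS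
  refine ⟨hαne.mono Finset.subset_union_left, fun p hp q hq hpq => ?_,
    fun hcyc => (hasPosetCycle_union hsplit hαS hβS hcyc).elim hαc hβc⟩
  rcases Finset.mem_union.1 hp with hp | hp <;> rcases Finset.mem_union.1 hq with hq | hq
  · exact hαm p hp q hq hpq
  · exact HEdge.compat_of_lo_mem_of_lo_notMem hsplit (hαS p hp) (hβS q hq)
  · exact (HEdge.compat_of_lo_mem_of_lo_notMem hsplit (hαS q hq) (hβS p hp)).symm
  · exact hβm p hp q hq hpq

end Poset

/-- if a finite poset `X` decomposes as a disjoint union `A ⊔ B`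
and `f(A)` is strongly collapsible, then `f(X)` is strongly collapsible. -/
theorem stmt_17 {P : Type*} [PartialOrder P] [Fintype P] (s : Set P)
    (hsplit : ∀ a b : P, a ≤ b → (a ∈ s ↔ b ∈ s))
    (h : StronglyCollapsible (genMorse {x : P // x ∈ s})) :
    StronglyCollapsible (genMorse P) := by
  have hs : s.OrdConnected := ⟨fun a ha _ _ x hx => (hsplit a x hx.1).1 ha⟩
  exact (fullyConnected_genMorse_range_liftSubtype hs hsplit).stronglyCollapsible
    (h.map (HEdge.liftSubtype hs) (restrictTo_genMorse_range_liftSubtype_iff hs))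
end
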